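/- For every real ν > -1/2, the characteristic function φ_ν(t) := h_ν(−t²/4)/h_ν(t²/4) (equal to J_ν(t)/I_ν(t)) is self-reciprocal in van Dantzig's sense: its entire extension F(z) := h_ν(−z²/4)/h_ν(z²/4) satisfies F(t)·F(it) = 1 for every t ∈ ℝ with h_ν(−t²/4) ≠ 0. Moreover, any probability measure on ℝ with characteristic function φ_ν is not infinitely divisible. -/

import Mathlib

open MeasureTheory

/-- Characteristic function of a measure on ℝ: `t ↦ ∫ e^{itx} dμ(x)`. -/
noncomputable def charFn (μ : Measure ℝ) (t : ℝ) : ℂ :=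
  ∫ x, Complex.exp (t * x * Complex.I) ∂μ

/-- `h_ν(u) = ∑_{k=0}^∞ u^k / (k! Γ(ν+k+1))`. -/
noncomputable def hnu (ν : ℝ) (u : ℝ) : ℝ :=
  ∑' k : ℕ, u ^ k / (Nat.factorial k * Real.Gamma (ν + k + 1))

/-- `B_ν(t) = 1/(Γ(ν+1) h_ν(t²/4)) = t^ν/(2^ν Γ(ν+1) I_ν(t))`. -/
noncomputable def Bnu (ν : ℝ) (t : ℝ) : ℝ :=
  1 / (Real.Gamma (ν + 1) * hnu ν (t ^ 2 / 4))

/-- `b_ν(t) = exp(−(t²/2)·h_{ν+1}(t²/4)/h_ν(t²/4)) = exp(−t·I_{ν+1}(t)/I_ν(t))`. -/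
noncomputable def bnu (ν : ℝ) (t : ℝ) : ℝ :=
  Real.exp (-(t ^ 2 / 2) * hnu (ν + 1) (t ^ 2 / 4) / hnu ν (t ^ 2 / 4))

/-- The `n`-fold convolution power of a measure on ℝ. -/
noncomputable def convPow (ρ : Measure ℝ) : ℕ → Measure ℝ
  | 0 => Measure.dirac 0
  | n + 1 => (convPow ρ n).conv ρ

/-- A probability measure on ℝ is infinitely divisible if for every `n ≥ 1` it is the
`n`-fold convolution of some probability measure. -/
def InfDivisible (μ : Measure ℝ) : Prop :=
  ∀ n : ℕ, 1 ≤ n → ∃ ρ : Measure ℝ, IsProbabilityMeasure ρ ∧ convPow ρ n = μ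

/-- Complex (entire) version of `h_ν`: `h_ν(u) = ∑_{k=0}^∞ u^k / (k! Γ(ν+k+1))` for `u ∈ ℂ`. -/
noncomputable def hnuC (ν : ℝ) (u : ℂ) : ℂ :=
  ∑' k : ℕ, u ^ k / ((Nat.factorial k : ℂ) * (Real.Gamma (ν + k + 1) : ℂ))

/-- The entire extension `F(z) = h_ν(−z²/4)/h_ν(z²/4)` of `φ_ν = J_ν/I_ν`. -/
noncomputable def Fext (ν : ℝ) (z : ℂ) : ℂ :=
  hnuC ν (-z ^ 2 / 4) / hnuC ν (z ^ 2 / 4)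

/-!
`F(t) F(it) = 1` is immediate from `(it)² = -t²` and `h_ν > 0` on `[0, ∞)`.

Integrating the series of `h_ν` termwise against `e^{-u} u^{ν+1}` on `(0, ∞)` gives
`∫ e^{-u} u^{ν+1} h_ν(bu) du = (ν + 1 + b) e^b`, which is negative for `b = -(ν + 2)`. So `h_ν`
changes sign on `(-∞, 0]` and vanishes at some `-s < 0`, i.e. `φ_ν(2√s) = 0`.

On the other hand, the characteristic function `φ` of an infinitely divisible law has no zeros:
applying `1 - cos 2a ≤ 4 (1 - cos a)` to the symmetrisation of a measure with characteristic
function `ψ` gives `1 - |ψ(2t)|² ≤ 4 (1 - |ψ(t)|²)`. If `φ = ψⁿ` vanishes at `t`, so does `ψ`,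
whence `|φ(t/2)|² ≤ (3/4)ⁿ` for every `n`; thus `φ` vanishes at `t/2ᵏ` for all `k`, and by
continuity at `0`, where `φ = 1`.
-/

open Real Set Filter Topology ComplexConjugate
open scoped Nat

instance isProbabilityMeasure_convPow (ρ : Measure ℝ) [IsProbabilityMeasure ρ] :
    ∀ n, IsProbabilityMeasure (convPow ρ n)
  | 0 => by rw [convPow]; infer_instance
  | n + 1 => by rw [convPow]; have := isProbabilityMeasure_convPow ρ n; infer_instance

lemma charFn_eq_charFun (μ : Measure ℝ) : charFn μ = charFun μ :=
  funext fun t => (charFun_apply_real t).symm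

lemma charFun_convPow (ρ : Measure ℝ) [IsProbabilityMeasure ρ] (n : ℕ) (t : ℝ) :
    charFun (convPow ρ n) t = charFun ρ t ^ n := by
  induction n with
  | zero => simp [convPow]
  | succ n ih => rw [convPow, charFun_conv, ih, pow_succ]

lemma re_charFun_eq_integral_cos (μ : Measure ℝ) [IsProbabilityMeasure μ] (t : ℝ) :
    (charFun μ t).re = ∫ x, cos (t * x) ∂μ := by
  rw [charFun_apply_real, ← RCLike.re_eq_complex_re, ← integral_re]
  · simp_rw [RCLike.re_eq_complex_re, ← Complex.ofReal_mul, Complex.exp_ofReal_mul_I_re]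
  · exact (integrable_const (1 : ℝ)).mono (by fun_prop) (by simp [Complex.norm_exp])

lemma integrable_cos_mul (μ : Measure ℝ) [IsProbabilityMeasure μ] (t : ℝ) :
    Integrable (fun x => cos (t * x)) μ :=
  (integrable_const (1 : ℝ)).mono (by fun_prop) (by simp [abs_cos_le_one])

lemma one_sub_re_charFun (μ : Measure ℝ) [IsProbabilityMeasure μ] (t : ℝ) :
    1 - (charFun μ t).re = ∫ x, (1 - cos (t * x)) ∂μ := by
  rw [re_charFun_eq_integral_cos, integral_sub (integrable_const 1) (integrable_cos_mul μ t)]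
  simp

lemma one_sub_re_charFun_two_mul_le (μ : Measure ℝ) [IsProbabilityMeasure μ] (t : ℝ) :
    1 - (charFun μ (2 * t)).re ≤ 4 * (1 - (charFun μ t).re) := by
  rw [one_sub_re_charFun, one_sub_re_charFun, ← integral_const_mul]
  refine integral_mono ((integrable_const 1).sub (integrable_cos_mul μ _))
    (((integrable_const 1).sub (integrable_cos_mul μ t)).const_mul 4) fun x => ?_
  -- `1 - cos 2a = 2 (1 - cos a)(1 + cos a) ≤ 4 (1 - cos a)`
  have h2 : cos (2 * t * x) = 2 * cos (t * x) ^ 2 - 1 := by rw [mul_assoc, cos_two_mul]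
  dsimp only
  nlinarith [neg_one_le_cos (t * x), cos_le_one (t * x)]

lemma charFun_conv_map_neg (μ : Measure ℝ) [IsProbabilityMeasure μ] (t : ℝ) :
    charFun (μ ∗ μ.map (fun x => -x)) t = (‖charFun μ t‖ ^ 2 : ℝ) := by
  have : charFun (μ.map (fun x => -x)) t = conj (charFun μ t) := by
    simpa using charFun_map_mul (μ := μ) (-1) t
  rw [charFun_conv, this, Complex.mul_conj']
  push_cast; rfl

lemma one_sub_sq_norm_charFun_two_mul_le (μ : Measure ℝ) [IsProbabilityMeasure μ] (t : ℝ) :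
    1 - ‖charFun μ (2 * t)‖ ^ 2 ≤ 4 * (1 - ‖charFun μ t‖ ^ 2) := by
  have : IsProbabilityMeasure (μ.map fun x => -x) := Measure.isProbabilityMeasure_map (by fun_prop)
  have hsymm := one_sub_re_charFun_two_mul_le (μ ∗ μ.map (fun x => -x)) t
  rwa [charFun_conv_map_neg, charFun_conv_map_neg, Complex.ofReal_re, Complex.ofReal_re] at hsymm

lemma charFun_div_two_eq_zero_of_infDivisible {μ : Measure ℝ} [IsProbabilityMeasure μ]
    (hμ : InfDivisible μ) {t : ℝ} (ht : charFun μ t = 0) : charFun μ (t / 2) = 0 := by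
  have hbound (n : ℕ) : ‖charFun μ (t / 2)‖ ^ 2 ≤ (3 / 4) ^ (n + 1) := by
    obtain ⟨ρ, hρ, rfl⟩ := hμ (n + 1) n.succ_pos
    have hρt : charFun ρ t = 0 := by
      rwa [charFun_convPow, pow_eq_zero_iff n.succ_ne_zero] at ht
    have hρ_half := one_sub_sq_norm_charFun_two_mul_le ρ (t / 2)
    rw [mul_div_cancel₀ t two_ne_zero, hρt, norm_zero] at hρ_half
    rw [charFun_convPow, norm_pow, ← pow_mul, mul_comm, pow_mul]
    exact pow_le_pow_left₀ (sq_nonneg _) (by linarith) _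
  have hlim : Tendsto (fun n : ℕ => (3 / 4 : ℝ) ^ (n + 1)) atTop (𝓝 0) :=
    (tendsto_pow_atTop_nhds_zero_of_lt_one (by norm_num) (by norm_num)).comp
      (tendsto_add_atTop_nat 1)
  have hsq : ‖charFun μ (t / 2)‖ ^ 2 ≤ 0 := ge_of_tendsto' hlim hbound
  exact norm_eq_zero.mp (pow_eq_zero_iff two_ne_zero |>.mp (le_antisymm hsq (sq_nonneg _)))

theorem charFun_ne_zero_of_infDivisible {μ : Measure ℝ} [IsProbabilityMeasure μ]
    (hμ : InfDivisible μ) (t : ℝ) : charFun μ t ≠ 0 := by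
  intro ht
  have hzero (k : ℕ) : charFun μ (t / 2 ^ k) = 0 := by
    induction k with
    | zero => simpa using ht
    | succ k ih => rw [pow_succ, ← div_div]; exact charFun_div_two_eq_zero_of_infDivisible hμ ih
  have hlim : Tendsto (fun k : ℕ => t / 2 ^ k) atTop (𝓝 0) :=
    tendsto_const_nhds.div_atTop (tendsto_pow_atTop_atTop_of_one_lt one_lt_two)
  have h0 : charFun μ 0 = 0 :=
    tendsto_nhds_unique ((continuous_charFun.tendsto 0).comp hlim)
      (by simp [Function.comp_def, hzero])
  simp at h0

lemma Real.hasSum_pow_div_factorial (x : ℝ) : HasSum (fun n : ℕ => x ^ n / n !) (exp x) := by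
  rw [Real.exp_eq_exp_ℝ]; exact NormedSpace.expSeries_div_hasSum_exp x

lemma hasSum_add_nat_mul_pow_div_factorial (a x : ℝ) :
    HasSum (fun n : ℕ => (a + n) * (x ^ n / n !)) ((a + x) * exp x) := by
  have hshift : HasSum (fun n : ℕ => ((n + 1 : ℕ) : ℝ) * (x ^ (n + 1) / (n + 1)!)) (x * exp x) := by
    have hterm (n : ℕ) : ((n + 1 : ℕ) : ℝ) * (x ^ (n + 1) / (n + 1)!) = x * (x ^ n / n !) := by
      rw [Nat.factorial_succ, pow_succ, Nat.cast_mul]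
      field_simp
    simpa only [hterm] using (Real.hasSum_pow_div_factorial x).mul_left x
  have hmul : HasSum (fun n : ℕ => (n : ℝ) * (x ^ n / n !)) (x * exp x) := by
    rw [← hasSum_nat_add_iff' 1]
    simpa using hshift
  simpa [add_mul] using ((Real.hasSum_pow_div_factorial x).mul_left a).add hmul

section Hnu

variable {ν : ℝ}

noncomputable def hnuTerm (ν : ℝ) (k : ℕ) (u : ℝ) : ℝ := u ^ k / (k ! * Gamma (ν + k + 1))

lemma hnu_eq_tsum_hnuTerm (ν u : ℝ) : hnu ν u = ∑' k, hnuTerm ν k u := rfl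

lemma Gamma_add_nat_add_one_pos (hν : -1 < ν) (k : ℕ) : 0 < Gamma (ν + k + 1) :=
  Gamma_pos_of_pos (by linarith [k.cast_nonneg (α := ℝ)])

lemma Gamma_add_two_le_Gamma_add_nat_add_two (hν : -1 < ν) (k : ℕ) :
    Gamma (ν + 2) ≤ Gamma (ν + k + 2) := by
  induction k with
  | zero => simp
  | succ k ih =>
    have hk : (1 : ℝ) ≤ ν + k + 2 := by linarith [k.cast_nonneg (α := ℝ)]
    calc Gamma (ν + 2) ≤ Gamma (ν + k + 2) := ih
      _ ≤ (ν + k + 2) * Gamma (ν + k + 2) :=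
        le_mul_of_one_le_left (Gamma_pos_of_pos (by linarith)).le hk
      _ = Gamma (ν + (k + 1 : ℕ) + 2) := by
        rw [← Gamma_add_one (by linarith)]; push_cast; ring_nf

lemma min_Gamma_le_Gamma_add_nat_add_one (hν : -1 < ν) (k : ℕ) :
    min (Gamma (ν + 1)) (Gamma (ν + 2)) ≤ Gamma (ν + k + 1) := by
  rcases k with _ | k
  · simp
  · have := Gamma_add_two_le_Gamma_add_nat_add_two hν k
    push_cast
    rw [show ν + (k + 1) + 1 = ν + k + 2 by ring]
    exact (min_le_right _ _).trans this

lemma abs_hnuTerm (hν : -1 < ν) (k : ℕ) (u : ℝ) : |hnuTerm ν k u| = hnuTerm ν k |u| := by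
  have := Gamma_add_nat_add_one_pos hν k
  rw [hnuTerm, hnuTerm, abs_div, abs_pow,
    abs_of_pos (show (0 : ℝ) < k ! * Gamma (ν + k + 1) by positivity)]

lemma min_Gamma_pos (hν : -1 < ν) : 0 < min (Gamma (ν + 1)) (Gamma (ν + 2)) :=
  lt_min (Gamma_pos_of_pos (by linarith)) (Gamma_pos_of_pos (by linarith))

lemma abs_hnuTerm_le (hν : -1 < ν) (k : ℕ) (u : ℝ) :
    |hnuTerm ν k u| ≤ |u| ^ k / k ! / min (Gamma (ν + 1)) (Gamma (ν + 2)) := by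
  have := min_Gamma_pos hν
  rw [abs_hnuTerm hν, hnuTerm, div_div]
  gcongr
  exact min_Gamma_le_Gamma_add_nat_add_one hν k

lemma summable_hnuTerm (hν : -1 < ν) (u : ℝ) : Summable (fun k => hnuTerm ν k u) :=
  .of_norm_bounded ((Real.summable_pow_div_factorial |u|).div_const _) (abs_hnuTerm_le hν · u)

lemma hnu_pos (hν : -1 < ν) {u : ℝ} (hu : 0 ≤ u) : 0 < hnu ν u := by
  have hterm (k : ℕ) : 0 ≤ hnuTerm ν k u := by
    have := Gamma_add_nat_add_one_pos hν k
    unfold hnuTerm; positivity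
  have h0 : 0 < hnuTerm ν 0 u := by
    have := Gamma_add_nat_add_one_pos hν 0
    simpa [hnuTerm] using this
  exact (summable_hnuTerm hν u).tsum_pos hterm 0 h0

lemma continuous_hnu (hν : -1 < ν) : Continuous (hnu ν) := by
  refine continuous_iff_continuousAt.2 fun x => ?_
  have hbound (k : ℕ) (y : ℝ) (hy : y ∈ Icc (x - 1) (x + 1)) :
      ‖hnuTerm ν k y‖ ≤ (|x| + 1) ^ k / k ! / min (Gamma (ν + 1)) (Gamma (ν + 2)) := by
    have hy' : |y| ≤ |x| + 1 :=
      abs_le.2 ⟨by linarith [neg_abs_le x, hy.1], by linarith [le_abs_self x, hy.2]⟩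
    have := min_Gamma_pos hν
    refine (abs_hnuTerm_le hν k y).trans ?_
    gcongr
  exact (continuousOn_tsum (fun k => by unfold hnuTerm; fun_prop)
    ((Real.summable_pow_div_factorial _).div_const _) hbound).continuousAt
    (Icc_mem_nhds (by linarith) (by linarith))

lemma hnuC_ofReal (ν x : ℝ) : hnuC ν x = hnu ν x := by
  rw [hnuC, hnu, Complex.ofReal_tsum]
  push_cast; rfl

lemma Fext_mul_Fext_mul_I (hν : -1 < ν) (t : ℝ) (ht : hnu ν (-t ^ 2 / 4) ≠ 0) :
    Fext ν t * Fext ν (t * Complex.I) = 1 := by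
  have hpos : (hnu ν (t ^ 2 / 4) : ℂ) ≠ 0 := mod_cast (hnu_pos hν (by positivity)).ne'
  have hneg : (hnu ν (-t ^ 2 / 4) : ℂ) ≠ 0 := mod_cast ht
  have hI : -((t : ℂ) * Complex.I) ^ 2 / 4 = ((t ^ 2 / 4 : ℝ) : ℂ) := by
    push_cast; rw [mul_pow, Complex.I_sq]; ring
  have hI' : ((t : ℂ) * Complex.I) ^ 2 / 4 = ((-t ^ 2 / 4 : ℝ) : ℂ) := by
    push_cast; rw [mul_pow, Complex.I_sq]; ring
  have hneg_sq : -(t : ℂ) ^ 2 / 4 = ((-t ^ 2 / 4 : ℝ) : ℂ) := by push_cast; ring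
  have hsq : (t : ℂ) ^ 2 / 4 = ((t ^ 2 / 4 : ℝ) : ℂ) := by push_cast; ring
  rw [Fext, Fext, hI, hI', hneg_sq, hsq, hnuC_ofReal, hnuC_ofReal,
    div_mul_div_comm, mul_comm, div_self (mul_ne_zero hpos hneg)]

lemma exp_neg_mul_rpow_mul_hnuTerm (b : ℝ) (k : ℕ) {u : ℝ} (hu : 0 < u) :
    exp (-u) * u ^ (ν + 1) * hnuTerm ν k (b * u)
      = b ^ k / (k ! * Gamma (ν + k + 1)) * (exp (-u) * u ^ ((ν + k + 2) - 1)) := by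
  rw [hnuTerm, mul_pow, show (ν + k + 2) - 1 = (ν + 1) + (k : ℝ) by ring,
    rpow_add hu (ν + 1) k, rpow_natCast]
  ring

lemma integrableOn_exp_neg_mul_rpow_mul_hnuTerm (hν : -1 < ν) (b : ℝ) (k : ℕ) :
    IntegrableOn (fun u => exp (-u) * u ^ (ν + 1) * hnuTerm ν k (b * u)) (Ioi 0) := by
  refine IntegrableOn.congr_fun ?_ (fun _ hu => (exp_neg_mul_rpow_mul_hnuTerm b k hu).symm)
    measurableSet_Ioi
  exact (GammaIntegral_convergent (by linarith [k.cast_nonneg (α := ℝ)])).const_mul _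

lemma integral_exp_neg_mul_rpow_mul_hnuTerm (hν : -1 < ν) (b : ℝ) (k : ℕ) :
    ∫ u in Ioi 0, exp (-u) * u ^ (ν + 1) * hnuTerm ν k (b * u) = (ν + k + 1) * (b ^ k / k !) := by
  have hk : 0 < ν + k + 1 := by linarith [k.cast_nonneg (α := ℝ)]
  have hΓ : Gamma (ν + k + 2) = (ν + k + 1) * Gamma (ν + k + 1) := by
    rw [← Gamma_add_one hk.ne']; ring_nf
  have := Gamma_add_nat_add_one_pos hν k
  rw [setIntegral_congr_fun measurableSet_Ioi fun _ hu => exp_neg_mul_rpow_mul_hnuTerm b k hu,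
    integral_const_mul, ← Gamma_eq_integral (by linarith), hΓ]
  field_simp

lemma integral_exp_neg_mul_rpow_mul_hnu (hν : -1 < ν) (b : ℝ) :
    ∫ u in Ioi 0, exp (-u) * u ^ (ν + 1) * hnu ν (b * u) = (ν + 1 + b) * exp b := by
  have hnorm (k : ℕ) : ∫ u in Ioi 0, ‖exp (-u) * u ^ (ν + 1) * hnuTerm ν k (b * u)‖
      = (ν + k + 1) * (|b| ^ k / k !) := by
    rw [← integral_exp_neg_mul_rpow_mul_hnuTerm hν |b| k]
    refine setIntegral_congr_fun measurableSet_Ioi fun u (hu : 0 < u) => ?_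
    rw [Real.norm_eq_abs, abs_mul, abs_mul, abs_hnuTerm hν, abs_mul, abs_of_pos hu,
      abs_of_pos (exp_pos _), abs_of_pos (rpow_pos_of_pos hu _)]
  have hsum := hasSum_integral_of_summable_integral_norm
    (integrableOn_exp_neg_mul_rpow_mul_hnuTerm hν b)
    (by simpa only [hnorm, add_right_comm] using
      (hasSum_add_nat_mul_pow_div_factorial (ν + 1) |b|).summable)
  simp only [integral_exp_neg_mul_rpow_mul_hnuTerm hν, tsum_mul_left, ← hnu_eq_tsum_hnuTerm] at hsum
  exact hsum.unique
    (by simpa only [add_right_comm] using hasSum_add_nat_mul_pow_div_factorial (ν + 1) b)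

lemma exists_pos_hnu_neg_lt_zero (hν : -1 < ν) : ∃ x > 0, hnu ν (-x) < 0 := by
  by_contra! h
  have hint := integral_exp_neg_mul_rpow_mul_hnu hν (-(ν + 2))
  have hnonneg : 0 ≤ ∫ u in Ioi 0, exp (-u) * u ^ (ν + 1) * hnu ν (-(ν + 2) * u) := by
    refine setIntegral_nonneg measurableSet_Ioi fun u (hu : 0 < u) => ?_
    have := h ((ν + 2) * u) (mul_pos (by linarith) hu)
    rw [neg_mul]
    positivity
  have := exp_pos (-(ν + 2))
  nlinarith

lemma exists_pos_hnu_neg_eq_zero (hν : -1 < ν) : ∃ s > 0, hnu ν (-s) = 0 := by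
  obtain ⟨x, hx, hneg⟩ := exists_pos_hnu_neg_lt_zero hν
  have h0 : 0 < hnu ν (-0) := by rw [neg_zero]; exact hnu_pos hν le_rfl
  obtain ⟨s, hs, hzero⟩ := intermediate_value_Icc' hx.le
    ((continuous_hnu hν).comp continuous_neg).continuousOn ⟨hneg.le, h0.le⟩
  refine ⟨s, hs.1.lt_of_ne ?_, hzero⟩
  rintro rfl
  exact h0.ne' hzero

end Hnu

theorem stmt15 (ν : ℝ) (hν : -(1 / 2 : ℝ) < ν) :
    (∀ t : ℝ, hnu ν (-t ^ 2 / 4) ≠ 0 →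
      Fext ν (t : ℂ) * Fext ν ((t : ℂ) * Complex.I) = 1) ∧
    ∀ μ : Measure ℝ, IsProbabilityMeasure μ →
      (∀ t : ℝ, charFn μ t = ((hnu ν (-t ^ 2 / 4) / hnu ν (t ^ 2 / 4) : ℝ) : ℂ)) →
      ¬ InfDivisible μ := by
  have hν' : -1 < ν := by linarith
  refine ⟨Fext_mul_Fext_mul_I hν', fun μ _ hchar hμ => ?_⟩
  obtain ⟨s, hs, hzero⟩ := exists_pos_hnu_neg_eq_zero hν'
  refine charFun_ne_zero_of_infDivisible hμ (2 * √s) ?_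
  have hsq : (2 * √s) ^ 2 / 4 = s := by rw [mul_pow, sq_sqrt hs.le]; ring
  rw [← charFn_eq_charFun, hchar, neg_div, hsq, hzero, zero_div, Complex.ofReal_zero]
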